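/- For all n ≥ 0, Σ_{k=0}^n [n choose k]_q q^{k²} z^k (z;q)_n (qz;q)_n / ((z;q)_{n-k}(qz;q)_k) = (q^n z²; q)_n. -/

import Mathlib

/-!
Write the summand as `[n choose k]_q · w_n(z, k)`. The q-Pascal rule
`[n+1, k+1] = q^(k+1) [n, k+1] + [n, k]` turns the sum at `n + 1` into
`∑ₖ [n, k] (q^k w_{n+1}(z, k) + w_{n+1}(z, k+1))`, and the bracket collapses to
`(1 - q^(n+1) z²) w_n(q z, k)`. Induction on `n`, with `z` replaced by `q z`, then gives
the product `(1 - q^(n+1) z²) (q^(n+2) z²; q)_n = (q^(n+1) z²; q)_(n+1)`.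
-/

/-- The q-Pochhammer symbol `(a;q)_n`. -/
noncomputable def qPoch (a q : ℝ) (n : ℕ) : ℝ := ∏ j ∈ Finset.range n, (1 - q ^ j * a)

/-- The Gaussian (q-)binomial coefficient `[n choose k]_q`. -/
noncomputable def qbinom (q : ℝ) (n k : ℕ) : ℝ :=
  qPoch q q n / (qPoch q q k * qPoch q q (n - k))

section qPoch

variable {a q : ℝ}

@[simp]
lemma qPoch_zero : qPoch a q 0 = 1 := by simp [qPoch]

lemma qPoch_succ (n : ℕ) : qPoch a q (n + 1) = qPoch a q n * (1 - q ^ n * a) :=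
  Finset.prod_range_succ _ n

lemma qPoch_succ' (n : ℕ) : qPoch a q (n + 1) = (1 - a) * qPoch (q * a) q n := by
  rw [qPoch, Finset.prod_range_succ', qPoch, mul_comm]
  congr 1
  · simp
  · exact Finset.prod_congr rfl fun i _ => by ring

lemma qPoch_eq_div {n : ℕ} (h : 1 - q ^ n * a ≠ 0) :
    qPoch a q n = (1 - a) * qPoch (q * a) q n / (1 - q ^ n * a) := by
  rw [eq_div_iff h, ← qPoch_succ, qPoch_succ']

lemma qPoch_ne_zero {n : ℕ} (h : ∀ j, 1 - q ^ j * a ≠ 0) : qPoch a q n ≠ 0 :=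
  Finset.prod_ne_zero_iff.mpr fun j _ => h j

lemma one_sub_pow_mul_mul_ne_zero (h : ∀ j, 1 - q ^ j * a ≠ 0) (j : ℕ) :
    1 - q ^ j * (q * a) ≠ 0 := by
  simpa [pow_succ, mul_assoc] using h (j + 1)

lemma qPoch_self_ne_zero_of_abs_lt_one (hq : |q| < 1) (n : ℕ) : qPoch q q n ≠ 0 := by
  refine qPoch_ne_zero fun j => sub_ne_zero.mpr fun h => ?_
  have : |q| ^ (j + 1) < 1 := pow_lt_one₀ (abs_nonneg q) hq j.succ_ne_zero
  rw [← abs_pow, pow_succ, ← h, abs_one] at this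
  exact this.false

end qPoch

section qbinom

variable {q : ℝ} (hq : ∀ n, qPoch q q n ≠ 0)
include hq

lemma qbinom_zero_right (n : ℕ) : qbinom q n 0 = 1 := by
  simp [qbinom, div_self (hq n)]

lemma qbinom_self (n : ℕ) : qbinom q n n = 1 := by
  simp [qbinom, div_self (hq n)]

lemma qbinom_succ_succ {n k : ℕ} (hk : k < n) :
    qbinom q (n + 1) (k + 1) = q ^ (k + 1) * qbinom q n (k + 1) + qbinom q n k := by
  obtain ⟨b, rfl⟩ : ∃ b, n = k + b + 1 := ⟨n - k - 1, by omega⟩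
  have hk₁ := hq (k + 1)
  have hb₁ := hq (b + 1)
  rw [qPoch_succ, ← pow_succ] at hk₁ hb₁
  have := hq (k + b + 1); have := hq k; have := hq b
  rw [qbinom, qbinom, qbinom, show k + b + 1 + 1 - (k + 1) = b + 1 by omega,
    show k + b + 1 - (k + 1) = b by omega, show k + b + 1 - k = b + 1 by omega,
    qPoch_succ (k + b + 1), qPoch_succ k, qPoch_succ b, ← pow_succ, ← pow_succ, ← pow_succ]
  field_simp [right_ne_zero_of_mul hk₁, right_ne_zero_of_mul hb₁]
  ring

lemma sum_qbinom_succ_mul (f : ℕ → ℝ) (n : ℕ) :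
    ∑ k ∈ Finset.range (n + 2), qbinom q (n + 1) k * f k
      = ∑ k ∈ Finset.range (n + 1), qbinom q n k * (q ^ k * f k + f (k + 1)) := by
  have hmid : ∑ k ∈ Finset.range n, qbinom q (n + 1) (k + 1) * f (k + 1)
      = ∑ k ∈ Finset.range n, (qbinom q n (k + 1) * (q ^ (k + 1) * f (k + 1))
          + qbinom q n k * f (k + 1)) :=
    Finset.sum_congr rfl fun k hk => by
      rw [qbinom_succ_succ hq (Finset.mem_range.mp hk)]; ring
  simp only [mul_add, Finset.sum_add_distrib]
  rw [Finset.sum_range_succ', Finset.sum_range_succ, hmid, Finset.sum_add_distrib,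
    Finset.sum_range_succ' _ n, Finset.sum_range_succ _ n, qbinom_zero_right hq,
    qbinom_zero_right hq, qbinom_self hq, qbinom_self hq]
  simp only [pow_zero, one_mul]
  ring

end qbinom

noncomputable def zeilbergerWeight (q z : ℝ) (n k : ℕ) : ℝ :=
  q ^ (k ^ 2) * z ^ k * qPoch z q n * qPoch (q * z) q n / (qPoch z q (n - k) * qPoch (q * z) q k)

lemma zeilbergerWeight_succ {q z : ℝ} (hz : ∀ j, 1 - q ^ j * z ≠ 0) {n k : ℕ} (hk : k ≤ n) :
    q ^ k * zeilbergerWeight q z (n + 1) k + zeilbergerWeight q z (n + 1) (k + 1)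
      = (1 - q ^ (n + 1) * z ^ 2) * zeilbergerWeight q (q * z) n k := by
  obtain ⟨m, rfl⟩ := Nat.exists_eq_add_of_le' hk
  have hqz := one_sub_pow_mul_mul_ne_zero hz
  have hqqz := one_sub_pow_mul_mul_ne_zero hqz
  have h₀ : 1 - z ≠ 0 := by simpa using hz 0
  -- stated in the orientation to which `field_simp` normalizes `1 - q * z`
  have h₁ : 1 - z * q ≠ 0 := by simpa [mul_comm] using hqz 0
  have := hz m; have := hqz k
  have := qPoch_ne_zero (n := m) hqz; have := qPoch_ne_zero (n := k) hqqz
  rw [zeilbergerWeight, zeilbergerWeight, zeilbergerWeight,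
    show m + k + 1 - k = m + 1 by omega, show m + k + 1 - (k + 1) = m by omega,
    show m + k - k = m by omega, qPoch_succ' (a := z), qPoch_succ' (a := z),
    qPoch_succ' (a := q * z), qPoch_succ' (a := q * z), qPoch_eq_div (hz m),
    qPoch_eq_div (hqz k)]
  -- after cancelling common factors: `(1 - q^(k+1) z) + q^(k+1) z (1 - q^m z) = 1 - q^(m+k+1) z²`
  field_simp
  ring

lemma sum_qbinom_mul_zeilbergerWeight {q : ℝ} (hq : ∀ n, qPoch q q n ≠ 0) (n : ℕ) :
    ∀ z : ℝ, (∀ j, 1 - q ^ j * z ≠ 0) →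
      ∑ k ∈ Finset.range (n + 1), qbinom q n k * zeilbergerWeight q z n k
        = qPoch (q ^ n * z ^ 2) q n := by
  induction n with
  | zero => simp [qbinom, zeilbergerWeight]
  | succ n ih =>
    intro z hz
    calc ∑ k ∈ Finset.range (n + 2), qbinom q (n + 1) k * zeilbergerWeight q z (n + 1) k
        = ∑ k ∈ Finset.range (n + 1),
            qbinom q n k * ((1 - q ^ (n + 1) * z ^ 2) * zeilbergerWeight q (q * z) n k) := by
          rw [sum_qbinom_succ_mul hq]
          exact Finset.sum_congr rfl fun k hk => by
            rw [zeilbergerWeight_succ hz (Finset.mem_range_succ_iff.mp hk)]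
      _ = (1 - q ^ (n + 1) * z ^ 2) * qPoch (q ^ n * (q * z) ^ 2) q n := by
          rw [← ih (q * z) (one_sub_pow_mul_mul_ne_zero hz), Finset.mul_sum]
          exact Finset.sum_congr rfl fun k _ => by ring
      _ = qPoch (q ^ (n + 1) * z ^ 2) q (n + 1) := by
          rw [qPoch_succ']
          ring_nf

theorem q_zeilberger_identity (q z : ℝ) (hq0 : 0 < q) (hq1 : q < 1)
    (hz : ∀ j : ℕ, 1 - q ^ j * z ≠ 0) :
    ∀ n : ℕ,
      ∑ k ∈ Finset.range (n + 1),
        qbinom q n k * q ^ (k ^ 2) * z ^ k * qPoch z q n * qPoch (q * z) q n /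
          (qPoch z q (n - k) * qPoch (q * z) q k)
        = qPoch (q ^ n * z ^ 2) q n := by
  intro n
  have hq : ∀ m, qPoch q q m ≠ 0 :=
    qPoch_self_ne_zero_of_abs_lt_one (abs_lt.mpr ⟨by linarith, hq1⟩)
  rw [← sum_qbinom_mul_zeilbergerWeight hq n z hz]
  exact Finset.sum_congr rfl fun k _ => by rw [zeilbergerWeight]; ring
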